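/- arXiv:2110.10676 — 2 statements merged into one kernel-verified Lean document; each statement's English description precedes it below -/
import Mathlib

section
/- Let X be a finite connected poset and F a field. Then every Jordan automorphism of I(X,F), i.e. every bijective F-linear map φ: I(X,F) → I(X,F) satisfying φ(f²) = φ(f)² and φ(fgf) = φ(f)φ(g)φ(f) for all f, g ∈ I(X,F), is either an automorphism of I(X,F) or an anti-automorphism of I(X,F). -/
/-!
Write `εₜ = φ (single t t)` for the images of the diagonal matrix units. A Jordan map sends
orthogonal idempotents to orthogonal idempotents, and for `x < y` it splits `φ (single x y)` into
its Peirce components `εₓ φ(eₓᵧ) εᵧ + εᵧ φ(eₓᵧ) εₓ`. Surjectivity forces one of the two to vanish,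
so each pair `x < y` is straight or twisted. The `εₜ` are `#X` nonzero orthogonal idempotent
matrices of size `#X`, so each has rank one; hence a product through `εₜ` of two nonzero elements
is nonzero, and this (or, for chains, injectivity) prevents two pairs with a common element from
having different types. By connectedness all pairs have the same type. If all are straight, `φ` is
multiplicative on matrix units and hence multiplicative; if all are twisted, the same applies to
`φ` followed by the passage to the opposite algebra.
-/

open IncidenceAlgebra

/-- A poset is connected if any two elements can be joined by a sequence of elements
in which consecutive elements are comparable. -/
def PosetConnected (X : Type*) [PartialOrder X] : Prop :=
  ∀ x y : X, Relation.ReflTransGen (fun a b : X => a ≤ b ∨ b ≤ a) x y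

section Sandwich

variable {R : Type*} [SemigroupWithZero R] {p q a b c d : R}

theorem mul_eq_zero_of_eq_mul_mul (hp : p = a * p * b) (hq : q = c * q * d) (h : b * c = 0) :
    p * q = 0 := by
  rw [hp, hq, mul_assoc, mul_assoc a, ← mul_assoc b, ← mul_assoc b, h, zero_mul, zero_mul,
    mul_zero, mul_zero]

theorem IsIdempotentElem.mul_sandwich_mul (ha : IsIdempotentElem a) (hb : IsIdempotentElem b)
    (p : R) : a * (a * p * b) * b = a * p * b := by
  rw [← mul_assoc, ← mul_assoc, ha.eq, mul_assoc _ b, hb.eq]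

theorem IsIdempotentElem.mul_eq_of_eq_mul_mul (hb : IsIdempotentElem b) (hp : p = a * p * b) :
    p * b = p := by
  rw [hp, mul_assoc, hb.eq]

theorem IsIdempotentElem.mul_eq_of_eq_mul_mul' (ha : IsIdempotentElem a) (hp : p = a * p * b) :
    a * p = p := by
  rw [hp, ← mul_assoc, ← mul_assoc, ha.eq]

end Sandwich

structure IsJordanHom {R S : Type*} [Mul R] [Mul S] (φ : R → S) : Prop where
  map_mul_self (a : R) : φ (a * a) = φ a * φ a
  map_mul_mul_self (a b : R) : φ (a * b * a) = φ a * φ b * φ a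

namespace IsJordanHom

theorem op {R S : Type*} [Mul R] [Semigroup S] {φ : R → S} (hφ : IsJordanHom φ) :
    IsJordanHom (MulOpposite.op ∘ φ) where
  map_mul_self a := by simp [hφ.map_mul_self]
  map_mul_mul_self a b := by simp [hφ.map_mul_mul_self, mul_assoc]

variable {R S G : Type*} [Ring R] [Ring S] [FunLike G R S] [AddMonoidHomClass G R S] {φ : G}

theorem map_mul_add_mul (hφ : IsJordanHom φ) (a b : R) :
    φ (a * b + b * a) = φ a * φ b + φ b * φ a := by
  have h := hφ.map_mul_self (a + b)
  simp only [map_add, add_mul, mul_add, hφ.map_mul_self] at h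
  rw [map_add, ← sub_eq_zero, ← sub_eq_zero.2 h]
  abel

theorem map_mul_mul_add_mul_mul (hφ : IsJordanHom φ) (a b c : R) :
    φ (a * b * c + c * b * a) = φ a * φ b * φ c + φ c * φ b * φ a := by
  have h := hφ.map_mul_mul_self (a + c) b
  simp only [map_add, add_mul, mul_add, hφ.map_mul_mul_self] at h
  rw [map_add, ← sub_eq_zero, ← sub_eq_zero.2 h]
  abel

theorem orthogonalIdempotents_comp (hφ : IsJordanHom φ) {ι : Type*} {e : ι → R}
    (he : OrthogonalIdempotents e) : OrthogonalIdempotents (φ ∘ e) where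
  idem i := by
    rw [Function.comp_apply, IsIdempotentElem, ← hφ.map_mul_self, (he.idem i).eq]
  ortho i j hij := by
    have hidem : φ (e i) * φ (e i) = φ (e i) := by rw [← hφ.map_mul_self, (he.idem i).eq]
    have hsum : φ (e i) * φ (e j) + φ (e j) * φ (e i) = 0 := by
      rw [← hφ.map_mul_add_mul, he.ortho hij, he.ortho hij.symm, add_zero, map_zero]
    have hsand : φ (e i) * φ (e j) * φ (e i) = 0 := by
      rw [← hφ.map_mul_mul_self, he.ortho hij, zero_mul, map_zero]
    calc φ (e i) * φ (e j)
        = φ (e i) * (φ (e i) * φ (e j) + φ (e j) * φ (e i)) - φ (e i) * φ (e j) * φ (e i) := by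
          rw [mul_add, ← mul_assoc, hidem, ← mul_assoc, add_sub_cancel_right]
      _ = 0 := by rw [hsum, hsand, mul_zero, sub_zero]

theorem mul_map_mul_eq (hφ : IsJordanHom φ) {p q : R} (hp : IsIdempotentElem (φ p))
    (hq : IsIdempotentElem (φ q)) (hpq : φ p * φ q = 0) (v : R) :
    φ p * φ v * φ q = φ p * φ (p * v * q + q * v * p) * φ q := by
  rw [hφ.map_mul_mul_add_mul_mul]
  simp only [mul_add, ← mul_assoc, hp.eq, hpq, zero_mul, add_zero]
  simp only [mul_assoc, hq.eq]

end IsJordanHom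

section RankOne

open Module Submodule

variable {K V : Type*} [Field K] [AddCommGroup V] [Module K V]

theorem OrthogonalIdempotents.exists_range_le_span_singleton [FiniteDimensional K V]
    {ι : Type*} [Fintype ι] [DecidableEq ι] {e : ι → Module.End K V}
    (he : OrthogonalIdempotents e) (hne : ∀ i, e i ≠ 0) (hcard : Fintype.card ι = finrank K V)
    (i : ι) : ∃ u : V, LinearMap.range (e i) ≤ K ∙ u := by
  have hv : ∀ j, ∃ v, e j v ≠ 0 := fun j => by
    by_contra! h
    exact hne j (LinearMap.ext h)
  choose v hv using hv
  have hew : ∀ j k, e j (e k (v k)) = if j = k then e k (v k) else 0 := fun j k => by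
    rw [← Module.End.mul_apply, he.mul_eq]
    split_ifs with h <;> simp [h]
  -- the vectors `e k (v k)` are independent, hence a basis, and `e i` kills all but one of them
  have hli : LinearIndependent K fun k => e k (v k) := by
    rw [Fintype.linearIndependent_iff]
    intro c hc j
    have := congrArg (e j) hc
    simp only [map_sum, map_smul, hew, smul_ite, smul_zero, Finset.sum_ite_eq,
      Finset.mem_univ, if_true, map_zero] at this
    exact (smul_eq_zero.1 this).resolve_right (hv j)
  refine ⟨e i (v i), ?_⟩
  rintro _ ⟨x, rfl⟩
  obtain ⟨c, rfl⟩ := (mem_span_range_iff_exists_fun K).1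
    ((hli.span_eq_top_of_card_eq_finrank' hcard).ge (mem_top (x := x)))
  simp only [map_sum, map_smul, hew, smul_ite, smul_zero, Finset.sum_ite_eq, Finset.mem_univ,
    if_true]
  exact (K ∙ e i (v i)).smul_mem _ (mem_span_singleton_self _)

theorem Module.End.mul_ne_zero_of_range_le_span_singleton {f p q : Module.End K V} {u : V}
    (hf : LinearMap.range f ≤ K ∙ u) (hp : p * f = p) (hq : f * q = q)
    (hp0 : p ≠ 0) (hq0 : q ≠ 0) : p * q ≠ 0 := by
  have hfu : ∀ v, ∃ c : K, c • u = f v := fun v => mem_span_singleton.1 (hf ⟨v, rfl⟩)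
  obtain ⟨v, hv⟩ : ∃ v, q v ≠ 0 := by
    by_contra! h
    exact hq0 (LinearMap.ext h)
  obtain ⟨v', hv'⟩ : ∃ v, p v ≠ 0 := by
    by_contra! h
    exact hp0 (LinearMap.ext h)
  obtain ⟨c, hc⟩ := hfu (q v)
  obtain ⟨c', hc'⟩ := hfu v'
  rw [← Module.End.mul_apply, hq] at hc
  have hpu : p u ≠ 0 := by
    rw [← hp, Module.End.mul_apply, ← hc', map_smul] at hv'
    exact right_ne_zero_of_smul hv'
  have hc0 : c ≠ 0 := by
    rintro rfl
    exact hv (by rw [← hc, zero_smul])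
  intro hpq
  have : p (q v) = c • p u := by rw [← hc, map_smul]
  rw [← Module.End.mul_apply, hpq] at this
  exact smul_ne_zero hc0 hpu this.symm

end RankOne

theorem PosetConnected.imp_of_share {X : Type*} [PartialOrder X] (hX : PosetConnected X)
    {P : X → X → Prop}
    (hP : ∀ x y z w, x < y → z < w → (x = z ∨ x = w ∨ y = z ∨ y = w) → P x y → P z w)
    {x y z w : X} (hxy : x < y) (hzw : z < w) (h : P x y) : P z w := by
  suffices ∀ t, Relation.ReflTransGen (fun a b : X => a ≤ b ∨ b ≤ a) x t →
      ∀ z w, z < w → (z = t ∨ w = t) → P z w from this z (hX x z) z w hzw (Or.inl rfl)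
  intro t ht
  induction ht with
  | refl => exact fun z w hzw hz => hP x y z w hxy hzw (by tauto) h
  | @tail s t _ hst ih =>
    intro z w hzw ht
    rcases eq_or_ne s t with rfl | hne
    · exact ih z w hzw ht
    rcases hst with hst | hts
    · exact hP s t z w (hst.lt_of_ne hne) hzw (by tauto) (ih s t (hst.lt_of_ne hne) (Or.inl rfl))
    · exact hP t s z w (hts.lt_of_ne hne.symm) hzw (by tauto)
        (ih t s (hts.lt_of_ne hne.symm) (Or.inr rfl))

namespace IncidenceAlgebra

variable {𝕜 X : Type*} [PartialOrder X]

theorem sum_apply [AddCommMonoid 𝕜] {ι : Type*} (s : Finset ι) (f : ι → IncidenceAlgebra 𝕜 X)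
    (a b : X) : (∑ i ∈ s, f i) a b = ∑ i ∈ s, f i a b :=
  map_sum (⟨⟨fun f => f a b, rfl⟩, fun _ _ => rfl⟩ : IncidenceAlgebra 𝕜 X →+ 𝕜) f s

theorem mul_apply_eq_sum [NonUnitalNonAssocSemiring 𝕜] [LocallyFiniteOrder X] [Fintype X]
    (f g : IncidenceAlgebra 𝕜 X) (a b : X) : (f * g) a b = ∑ c, f a c * g c b := by
  refine Finset.sum_subset (Finset.subset_univ _) fun c _ hc => ?_
  rw [Finset.mem_Icc, not_and_or] at hc
  rcases hc with hc | hc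
  · rw [apply_eq_zero_of_not_le hc, zero_mul]
  · rw [apply_eq_zero_of_not_le hc, mul_zero]

variable [DecidableEq X]

open Classical in
/-- The matrix unit at `(x, y)`; it is `0` unless `x ≤ y`. -/
noncomputable def single [Zero 𝕜] [One 𝕜] (x y : X) : IncidenceAlgebra 𝕜 X where
  toFun a b := if a = x ∧ b = y ∧ x ≤ y then 1 else 0
  eq_zero_of_not_le' _ _ h := if_neg fun ⟨ha, hb, hxy⟩ => h (ha ▸ hb ▸ hxy)

def IsStraight [Zero 𝕜] [One 𝕜] {S : Type*} [Mul S] (φ : IncidenceAlgebra 𝕜 X → S) (x y : X) :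
    Prop :=
  φ (single x y) = φ (single x x) * φ (single x y) * φ (single y y)

def IsTwisted [Zero 𝕜] [One 𝕜] {S : Type*} [Mul S] (φ : IncidenceAlgebra 𝕜 X → S) (x y : X) :
    Prop :=
  φ (single x y) = φ (single y y) * φ (single x y) * φ (single x x)

theorem isStraight_op_comp_iff [Zero 𝕜] [One 𝕜] {S : Type*} [Semigroup S]
    {φ : IncidenceAlgebra 𝕜 X → S} {x y : X} :
    IsStraight (MulOpposite.op ∘ φ) x y ↔ IsTwisted φ x y := by
  simp only [IsStraight, IsTwisted, Function.comp_apply, ← MulOpposite.op_mul, mul_assoc,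
    MulOpposite.op_inj]

section Semiring

variable [Semiring 𝕜] {x y z w : X}

theorem single_apply_of_le (h : x ≤ y) (a b : X) :
    single (𝕜 := 𝕜) x y a b = if a = x ∧ b = y then 1 else 0 := by
  simp [single, h]

theorem single_of_not_le (h : ¬x ≤ y) : single (𝕜 := 𝕜) x y = 0 := by
  ext a b; simp [single, h]

theorem single_ne_zero [Nontrivial 𝕜] (h : x ≤ y) : single (𝕜 := 𝕜) x y ≠ 0 := fun h0 => by
  simpa [single_apply_of_le h] using congrArg (fun f : IncidenceAlgebra 𝕜 X => f x y) h0

theorem sum_smul_single [Fintype X] (v : IncidenceAlgebra 𝕜 X) :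
    ∑ p : X × X, v p.1 p.2 • single p.1 p.2 = v := by
  ext a b hab
  rw [sum_apply, Finset.sum_eq_single (a, b)]
  · simp [single_apply_of_le hab]
  · rintro ⟨c, d⟩ - hne
    by_cases hcd : c ≤ d
    · have : ¬(a = c ∧ b = d) := fun ⟨hac, hbd⟩ => hne (by rw [hac, hbd])
      simp [single_apply_of_le hcd, this]
    · simp [single_of_not_le hcd]
  · simp

variable [LocallyFiniteOrder X]

theorem single_mul_apply (hxy : x ≤ y) (g : IncidenceAlgebra 𝕜 X) (a b : X) :
    (single x y * g : IncidenceAlgebra 𝕜 X) a b = if a = x then g y b else 0 := by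
  rw [mul_apply]
  by_cases hax : a = x
  · by_cases hyb : y ≤ b
    · simp [single_apply_of_le hxy, hax, hxy, hyb]
    · simp [single_apply_of_le hxy, hax, hyb, apply_eq_zero_of_not_le hyb]
  · simp [single_apply_of_le hxy, hax]

theorem mul_single_apply (hzw : z ≤ w) (f : IncidenceAlgebra 𝕜 X) (a b : X) :
    (f * single z w : IncidenceAlgebra 𝕜 X) a b = if b = w then f a z else 0 := by
  rw [mul_apply]
  by_cases hbw : b = w
  · by_cases haz : a ≤ z
    · simp [single_apply_of_le hzw, hbw, hzw, haz]
    · simp [single_apply_of_le hzw, hbw, haz, apply_eq_zero_of_not_le haz]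
  · simp [single_apply_of_le hzw, hbw]

theorem single_mul_mul_single (v : IncidenceAlgebra 𝕜 X) (s t : X) :
    single s s * v * single t t = v s t • single s t := by
  ext a b
  rw [mul_single_apply le_rfl, single_mul_apply le_rfl, constSMul_apply]
  by_cases hst : s ≤ t
  · by_cases hbt : b = t <;> simp [single_apply_of_le hst, hbt]
  · simp [single_of_not_le hst, apply_eq_zero_of_not_le hst]

theorem single_mul_single_of_ne (h : y ≠ z) : single (𝕜 := 𝕜) x y * single z w = 0 := by
  by_cases hxy : x ≤ y
  · by_cases hzw : z ≤ w
    · ext a b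
      simp [single_mul_apply hxy, single_apply_of_le hzw, h]
    · rw [single_of_not_le hzw, mul_zero]
  · rw [single_of_not_le hxy, zero_mul]

theorem single_mul_single (hxy : x ≤ y) (hyz : y ≤ z) :
    single (𝕜 := 𝕜) x y * single y z = single x z := by
  ext a b
  simp [single_mul_apply hxy, single_apply_of_le hyz, single_apply_of_le (hxy.trans hyz), ite_and]

theorem orthogonalIdempotents_single :
    OrthogonalIdempotents fun t : X => single (𝕜 := 𝕜) t t where
  idem _ := single_mul_single le_rfl le_rfl
  ortho _ _ hst := single_mul_single_of_ne hst

end Semiring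

variable [CommRing 𝕜] [Fintype X] [LocallyFiniteOrder X]

noncomputable def toMatrix : IncidenceAlgebra 𝕜 X →+* Matrix X X 𝕜 where
  toFun f := Matrix.of fun a b => f a b
  map_one' := by ext a b; simp [Matrix.one_apply]
  map_mul' f g := by ext a b; simp only [Matrix.of_apply, Matrix.mul_apply, mul_apply_eq_sum]
  map_zero' := rfl
  map_add' _ _ := rfl

theorem toMatrix_injective : Function.Injective (toMatrix : IncidenceAlgebra 𝕜 X → _) :=
  fun _ _ h => by ext a b; exact congrFun (congrFun h a) b

end IncidenceAlgebra

namespace IsJordanHom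

section

variable {F X S : Type*} [CommRing F] [PartialOrder X] [LocallyFiniteOrder X]
  [DecidableEq X] [Ring S] [Algebra F S] {φ : IncidenceAlgebra F X →ₗ[F] S}

theorem orthogonalIdempotents_map_single (hφ : IsJordanHom φ) :
    OrthogonalIdempotents fun t : X => φ (single t t) :=
  hφ.orthogonalIdempotents_comp orthogonalIdempotents_single

theorem isIdempotentElem_map_single (hφ : IsJordanHom φ) (t : X) :
    IsIdempotentElem (φ (single t t)) :=
  hφ.orthogonalIdempotents_map_single.idem t

theorem map_single_mul_map_single_of_ne (hφ : IsJordanHom φ) {s t : X} (hst : s ≠ t) :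
    φ (single s s) * φ (single t t) = 0 :=
  hφ.orthogonalIdempotents_map_single.ortho hst

theorem isStraight_of_not_lt (hφ : IsJordanHom φ) {x y : X} (h : ¬x < y) : IsStraight φ x y := by
  by_cases hxy : x ≤ y
  · obtain rfl := hxy.eq_of_not_lt h
    rw [IsStraight, (hφ.isIdempotentElem_map_single x).eq, (hφ.isIdempotentElem_map_single x).eq]
  · rw [IsStraight, single_of_not_le hxy, map_zero, mul_zero, zero_mul]

theorem map_single_mul_single_of_isStraight (hφ : IsJordanHom φ)
    (h : ∀ x y, x < y → IsStraight φ x y) (x y z w : X) :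
    φ (single x y * single z w) = φ (single x y) * φ (single z w) := by
  have hS : ∀ x y, IsStraight φ x y := fun x y =>
    (em (x < y)).elim (h x y) hφ.isStraight_of_not_lt
  rcases eq_or_ne y z with rfl | hyz
  · by_cases hxy : x ≤ y
    swap
    · rw [single_of_not_le hxy, zero_mul, map_zero, zero_mul]
    by_cases hyw : y ≤ w
    swap
    · rw [single_of_not_le hyw, mul_zero, map_zero, mul_zero]
    rcases eq_or_ne w x with rfl | hwx
    · obtain rfl := le_antisymm hxy hyw
      rw [single_mul_single le_rfl le_rfl, (hφ.isIdempotentElem_map_single w).eq]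
    · have := hφ.map_mul_add_mul (single x y) (single y w)
      rwa [single_mul_single_of_ne hwx, add_zero, mul_eq_zero_of_eq_mul_mul (hS y w) (hS x y)
        (hφ.map_single_mul_map_single_of_ne hwx), add_zero] at this
  · rw [single_mul_single_of_ne hyz, map_zero]
    exact (mul_eq_zero_of_eq_mul_mul (hS x y) (hS z w)
      (hφ.map_single_mul_map_single_of_ne hyz)).symm

theorem map_mul_of_isStraight [Fintype X] (hφ : IsJordanHom φ)
    (h : ∀ x y, x < y → IsStraight φ x y) (v w : IncidenceAlgebra F X) : φ (v * w) = φ v * φ w := by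
  conv_lhs => rw [← sum_smul_single v, ← sum_smul_single w]
  conv_rhs => rw [← sum_smul_single v, ← sum_smul_single w]
  simp only [Finset.sum_mul_sum, map_sum, map_smul, smul_mul_smul_comm,
    hφ.map_single_mul_single_of_isStraight h]

theorem map_mul_rev_of_isTwisted [Fintype X] (hφ : IsJordanHom φ)
    (h : ∀ x y, x < y → IsTwisted φ x y) (v w : IncidenceAlgebra F X) : φ (v * w) = φ w * φ v := by
  set ψ := (MulOpposite.opLinearEquiv F).toLinearMap ∘ₗ φ
  have hψ : ⇑ψ = MulOpposite.op ∘ φ := rfl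
  have := map_mul_of_isStraight (φ := ψ) (hψ ▸ hφ.op)
    (fun x y hxy => hψ ▸ isStraight_op_comp_iff.2 (h x y hxy)) v w
  rw [hψ] at this
  exact MulOpposite.op_injective this

end

variable {F X : Type*} [Field F] [PartialOrder X] [LocallyFiniteOrder X] [DecidableEq X]
  {φ : IncidenceAlgebra F X →ₗ[F] IncidenceAlgebra F X} {x y z : X}

theorem map_single_eq_add (hφ : IsJordanHom φ) (hxy : x < y) :
    φ (single x y) = φ (single x x) * φ (single x y) * φ (single y y)
      + φ (single y y) * φ (single x y) * φ (single x x) := by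
  have h := hφ.map_mul_mul_add_mul_mul (single x x) (single x y) (single y y)
  rwa [single_mul_mul_single, single_mul_mul_single, single_of_not_le hxy.not_ge, smul_zero,
    add_zero, single_apply_of_le hxy.le, if_pos ⟨rfl, rfl⟩, one_smul] at h

theorem mul_map_mul_eq_smul (hφ : IsJordanHom φ) {s t : X} (hst : s ≠ t)
    (v : IncidenceAlgebra F X) :
    φ (single s s) * φ v * φ (single t t)
      = v s t • (φ (single s s) * φ (single s t) * φ (single t t))
        + v t s • (φ (single s s) * φ (single t s) * φ (single t t)) := by
  rw [hφ.mul_map_mul_eq (hφ.isIdempotentElem_map_single s) (hφ.isIdempotentElem_map_single t)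
    (hφ.map_single_mul_map_single_of_ne hst), single_mul_mul_single,
    single_mul_mul_single, map_add, map_smul, map_smul, mul_add, add_mul, mul_smul_comm,
    mul_smul_comm, smul_mul_assoc, smul_mul_assoc]

theorem isStraight_or_isTwisted (hφ : IsJordanHom φ) (hsurj : Function.Surjective φ)
    (hxy : x < y) : IsStraight φ x y ∨ IsTwisted φ x y := by
  set a := φ (single x x) * φ (single x y) * φ (single y y)
  set b := φ (single y y) * φ (single x y) * φ (single x x)
  have hu : φ (single x y) = a + b := hφ.map_single_eq_add hxy
  obtain ⟨v, hv⟩ := hsurj a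
  -- compare the `(x, y)` and `(y, x)` corners of `φ v = a` with the Peirce formula
  have ha : a = v x y • a := by
    have h := hφ.mul_map_mul_eq_smul hxy.ne v
    rwa [apply_eq_zero_of_not_le hxy.not_ge, zero_smul, add_zero, hv,
      (hφ.isIdempotentElem_map_single x).mul_sandwich_mul
        (hφ.isIdempotentElem_map_single y)] at h
  have hb : 0 = v x y • b := by
    have h := hφ.mul_map_mul_eq_smul hxy.ne' v
    rwa [apply_eq_zero_of_not_le hxy.not_ge, zero_smul, zero_add, hv, ← mul_assoc, ← mul_assoc,
      hφ.map_single_mul_map_single_of_ne hxy.ne', zero_mul, zero_mul, zero_mul] at h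
  rcases eq_or_ne (v x y) 0 with hc | hc
  · right
    rw [hc, zero_smul] at ha
    show φ (single x y) = b
    rw [hu, ha, zero_add]
  · left
    show φ (single x y) = a
    rw [hu, (smul_eq_zero.1 hb.symm).resolve_left hc, add_zero]

theorem map_single_eq_mul_add_mul (hφ : IsJordanHom φ) (hxy : x < y) (hyz : y < z) :
    φ (single x z) = φ (single x y) * φ (single y z) + φ (single y z) * φ (single x y) := by
  have h := hφ.map_mul_add_mul (single x y) (single y z)
  rwa [single_mul_single hxy.le hyz.le, single_mul_single_of_ne (hxy.trans hyz).ne', add_zero] at h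

theorem mul_ne_zero_of_mul_map_single [Fintype X] (hφ : IsJordanHom φ) (hinj : Function.Injective φ) (t : X)
    {p q : IncidenceAlgebra F X} (hp : p * φ (single t t) = p) (hq : φ (single t t) * q = q)
    (hp0 : p ≠ 0) (hq0 : q ≠ 0) : p * q ≠ 0 := by
  -- as matrices, the `φ (single s s)` are `#X` orthogonal nonzero idempotents, so of rank one
  let ρ : IncidenceAlgebra F X →+* Module.End F (X → F) :=
    (Matrix.toLinAlgEquiv' : Matrix X X F ≃ₐ[F] _).toRingHom.comp toMatrix
  have hρ : Function.Injective ρ := Matrix.toLinAlgEquiv'.injective.comp toMatrix_injective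
  obtain ⟨u, hu⟩ := (hφ.orthogonalIdempotents_map_single.map ρ).exists_range_le_span_singleton
    (fun s => (map_ne_zero_iff ρ hρ).2 ((map_ne_zero_iff φ hinj).2 (single_ne_zero le_rfl)))
    (Module.finrank_fintype_fun_eq_card F).symm t
  have := Module.End.mul_ne_zero_of_range_le_span_singleton hu
    (by rw [Function.comp_apply, ← map_mul, hp]) (by rw [Function.comp_apply, ← map_mul, hq])
    ((map_ne_zero_iff ρ hρ).2 hp0) ((map_ne_zero_iff ρ hρ).2 hq0)
  rwa [← map_mul, map_ne_zero_iff ρ hρ] at this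

end IsJordanHom

namespace IncidenceAlgebra.IsStraight

variable {F X : Type*} [Field F] [PartialOrder X] [LocallyFiniteOrder X] [DecidableEq X]
  {φ : IncidenceAlgebra F X →ₗ[F] IncidenceAlgebra F X} {x y z : X}

theorem not_isTwisted (hs : IsStraight φ x y) (hφ : IsJordanHom φ) (hinj : Function.Injective φ)
    (hxy : x < y) : ¬IsTwisted φ x y := fun ht => by
  refine (map_ne_zero_iff φ hinj).2 (single_ne_zero hxy.le) ?_
  rw [hs, ht]
  simp only [← mul_assoc, hφ.map_single_mul_map_single_of_ne hxy.ne, zero_mul]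

theorem not_isTwisted_above (hs : IsStraight φ x y) (hφ : IsJordanHom φ)
    (hinj : Function.Injective φ) (hxy : x < y) (hyz : y < z) : ¬IsTwisted φ y z := fun ht => by
  refine (map_ne_zero_iff φ hinj).2 (single_ne_zero (hxy.trans hyz).le) ?_
  rw [hφ.map_single_eq_mul_add_mul hxy hyz,
    mul_eq_zero_of_eq_mul_mul hs ht (hφ.map_single_mul_map_single_of_ne hyz.ne),
    mul_eq_zero_of_eq_mul_mul ht hs (hφ.map_single_mul_map_single_of_ne hxy.ne'), add_zero]

theorem not_isTwisted_below (hs : IsStraight φ y z) (hφ : IsJordanHom φ)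
    (hinj : Function.Injective φ) (hxy : x < y) (hyz : y < z) : ¬IsTwisted φ x y := fun ht => by
  refine (map_ne_zero_iff φ hinj).2 (single_ne_zero (hxy.trans hyz).le) ?_
  rw [hφ.map_single_eq_mul_add_mul hxy hyz,
    mul_eq_zero_of_eq_mul_mul ht hs (hφ.map_single_mul_map_single_of_ne hxy.ne),
    mul_eq_zero_of_eq_mul_mul hs ht (hφ.map_single_mul_map_single_of_ne hyz.ne'), add_zero]

section Finite

variable [Fintype X]

theorem not_isTwisted_sharing_top (hs : IsStraight φ x y) (hφ : IsJordanHom φ)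
    (hinj : Function.Injective φ) (hxy : x < y) (hzy : z < y) (hxz : x ≠ z) :
    ¬IsTwisted φ z y := fun ht => by
  have h := hφ.map_mul_add_mul (single x y) (single z y)
  rw [single_mul_single_of_ne hzy.ne', single_mul_single_of_ne hxy.ne', add_zero, map_zero,
    mul_eq_zero_of_eq_mul_mul ht hs (hφ.map_single_mul_map_single_of_ne hxz.symm), add_zero] at h
  exact hφ.mul_ne_zero_of_mul_map_single hinj y
    ((hφ.isIdempotentElem_map_single y).mul_eq_of_eq_mul_mul hs)
    ((hφ.isIdempotentElem_map_single y).mul_eq_of_eq_mul_mul' ht)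
    ((map_ne_zero_iff φ hinj).2 (single_ne_zero hxy.le))
    ((map_ne_zero_iff φ hinj).2 (single_ne_zero hzy.le)) h.symm

theorem not_isTwisted_sharing_bottom (hs : IsStraight φ x y) (hφ : IsJordanHom φ)
    (hinj : Function.Injective φ) (hxy : x < y) (hxz : x < z) (hyz : y ≠ z) :
    ¬IsTwisted φ x z := fun ht => by
  have h := hφ.map_mul_add_mul (single x y) (single x z)
  rw [single_mul_single_of_ne hxy.ne', single_mul_single_of_ne hxz.ne', add_zero, map_zero,
    mul_eq_zero_of_eq_mul_mul hs ht (hφ.map_single_mul_map_single_of_ne hyz), zero_add] at h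
  exact hφ.mul_ne_zero_of_mul_map_single hinj x
    ((hφ.isIdempotentElem_map_single x).mul_eq_of_eq_mul_mul ht)
    ((hφ.isIdempotentElem_map_single x).mul_eq_of_eq_mul_mul' hs)
    ((map_ne_zero_iff φ hinj).2 (single_ne_zero hxz.le))
    ((map_ne_zero_iff φ hinj).2 (single_ne_zero hxy.le)) h.symm

end Finite

end IncidenceAlgebra.IsStraight

theorem IsJordanHom.isStraight_of_isStraight_of_share {F X : Type*} [Field F] [PartialOrder X]
    [Fintype X] [LocallyFiniteOrder X] [DecidableEq X]
    {φ : IncidenceAlgebra F X →ₗ[F] IncidenceAlgebra F X} (hφ : IsJordanHom φ)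
    (hbij : Function.Bijective φ) {x y z w : X} (hxy : x < y) (hzw : z < w)
    (hsh : x = z ∨ x = w ∨ y = z ∨ y = w) (hs : IsStraight φ x y) : IsStraight φ z w := by
  refine (hφ.isStraight_or_isTwisted hbij.2 hzw).resolve_right ?_
  rcases hsh with rfl | rfl | rfl | rfl
  · rcases eq_or_ne y w with rfl | hyw
    · exact hs.not_isTwisted hφ hbij.1 hxy
    · exact hs.not_isTwisted_sharing_bottom hφ hbij.1 hxy hzw hyw
  · exact hs.not_isTwisted_below hφ hbij.1 hzw hxy
  · exact hs.not_isTwisted_above hφ hbij.1 hxy hzw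
  · rcases eq_or_ne x z with rfl | hxz
    · exact hs.not_isTwisted hφ hbij.1 hxy
    · exact hs.not_isTwisted_sharing_top hφ hbij.1 hxy hzw hxz

/-- every Jordan automorphism of the incidence algebra of a finite connected
poset over a field is an automorphism or an anti-automorphism. -/
theorem stmt_1 {X : Type*} [PartialOrder X] [Fintype X] [LocallyFiniteOrder X] [DecidableEq X]
    {F : Type*} [Field F]
    (hconn : PosetConnected X)
    (φ : IncidenceAlgebra F X →ₗ[F] IncidenceAlgebra F X)
    (hbij : Function.Bijective φ)
    (hsq : ∀ f : IncidenceAlgebra F X, φ (f * f) = φ f * φ f)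
    (htriple : ∀ f g : IncidenceAlgebra F X, φ (f * g * f) = φ f * φ g * φ f) :
    (∀ f g : IncidenceAlgebra F X, φ (f * g) = φ f * φ g) ∨
      (∀ f g : IncidenceAlgebra F X, φ (f * g) = φ g * φ f) := by
  have hφ : IsJordanHom φ := ⟨hsq, htriple⟩
  by_cases h : ∀ x y : X, x < y → IsStraight φ x y
  · exact Or.inl (hφ.map_mul_of_isStraight h)
  simp only [not_forall] at h
  obtain ⟨x₀, y₀, h₀, hs₀⟩ := h
  refine Or.inr (hφ.map_mul_rev_of_isTwisted fun x y hxy => ?_)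
  refine (hφ.isStraight_or_isTwisted hbij.2 hxy).resolve_left fun hs => hs₀ ?_
  exact hconn.imp_of_share (fun _ _ _ _ => hφ.isStraight_of_isStraight_of_share hbij) hxy h₀ hs
end

section
/- Let X be a finite connected poset, F a field, and φ a Jordan automorphism of I(X,F) (a bijective F-linear map with φ(f²) = φ(f)² and φ(fgf) = φ(f)φ(g)φ(f) for all f, g) such that φ(e_x) = e_{λ(x)} for some bijection λ: X → X. Then λ is either an order automorphism of X (λ and λ⁻¹ are order-preserving) or an order anti-automorphism of X (λ and λ⁻¹ are order-reversing). -/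
/-!
For `x < y`, the identities `e_x e_{xy} e_x = e_y e_{xy} e_y = 0` and
`e_{xy} = (e_x + e_y) e_{xy} (e_x + e_y)`, transported by `φ`, force `φ(e_{xy})` to be a nonzero
multiple of `e_{λx λy}` or of `e_{λy λx}`: `λ` preserves or reverses each strict relation.
For strict pairs `p`, `q` the Jordan product `e_p e_q + e_q e_p` is nonzero exactly when `p` and `q`
form a chain, and `φ` preserves Jordan products. Reversing only one of two strict pairs with a
common endpoint would change whether they form a chain, so such pairs are both preserved or both
reversed; by connectedness all strict pairs behave alike. Finally, on a finite poset the inverse of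
an order-preserving (order-reversing) bijection is again order-preserving (order-reversing).
-/

open IncidenceAlgebra

/-- The standard basis element `e_{xy}` of the incidence algebra (for `x ≤ y`):
the function taking value `1` at `(x, y)` and `0` elsewhere. -/
def eSingle {R : Type*} [Zero R] [One R] {X : Type*} [PartialOrder X] [DecidableEq X]
    (x y : X) (hxy : x ≤ y) : IncidenceAlgebra R X where
  toFun u v := if u = x ∧ v = y then 1 else 0
  eq_zero_of_not_le' u v huv := by
    show (if u = x ∧ v = y then (1 : R) else 0) = 0
    split_ifs with hc
    · obtain ⟨rfl, rfl⟩ := hc; exact absurd hxy huv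
    · rfl

section Single

variable {R X : Type*} [PartialOrder X] [DecidableEq X]

lemma eSingle_apply [Zero R] [One R] {a b : X} (hab : a ≤ b) (u v : X) :
    eSingle (R := R) a b hab u v = if u = a ∧ v = b then 1 else 0 := rfl

lemma eSingle_ne_zero [Zero R] [One R] [NeZero (1 : R)] {a b : X} (hab : a ≤ b) :
    eSingle (R := R) a b hab ≠ 0 := fun h => by
  simpa [eSingle_apply] using congrArg (fun f : IncidenceAlgebra R X => f a b) h

variable [Semiring R] [LocallyFiniteOrder X]

lemma eSingle_mul_apply {a b : X} (hab : a ≤ b) (f : IncidenceAlgebra R X) (u v : X) :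
    (eSingle a b hab * f : IncidenceAlgebra R X) u v = if u = a then f b v else 0 := by
  rw [mul_apply]
  split_ifs with hu
  · subst hu
    by_cases hbv : b ≤ v
    · rw [Finset.sum_eq_single_of_mem b (Finset.mem_Icc.2 ⟨hab, hbv⟩)]
      · simp [eSingle_apply]
      · intro z _ hz
        simp [eSingle_apply, hz]
    · rw [apply_eq_zero_of_not_le hbv]
      refine Finset.sum_eq_zero fun z _ => ?_
      by_cases hz : z = b
      · subst hz; rw [apply_eq_zero_of_not_le hbv, mul_zero]
      · simp [eSingle_apply, hz]
  · exact Finset.sum_eq_zero fun z _ => by simp [eSingle_apply, hu]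

lemma mul_eSingle_apply {a b : X} (hab : a ≤ b) (f : IncidenceAlgebra R X) (u v : X) :
    (f * eSingle a b hab : IncidenceAlgebra R X) u v = if v = b then f u a else 0 := by
  rw [mul_apply]
  split_ifs with hv
  · subst hv
    by_cases hua : u ≤ a
    · rw [Finset.sum_eq_single_of_mem a (Finset.mem_Icc.2 ⟨hua, hab⟩)]
      · simp [eSingle_apply]
      · intro z _ hz
        simp [eSingle_apply, hz]
    · rw [apply_eq_zero_of_not_le hua]
      refine Finset.sum_eq_zero fun z _ => ?_
      by_cases hz : z = a
      · subst hz; rw [apply_eq_zero_of_not_le hua, zero_mul]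
      · simp [eSingle_apply, hz]
  · exact Finset.sum_eq_zero fun z _ => by simp [eSingle_apply, hv]

lemma eSingle_mul_eSingle {a b c d : X} (hab : a ≤ b) (hcd : c ≤ d) :
    eSingle (R := R) a b hab * eSingle c d hcd =
      if h : b = c then eSingle a d (hab.trans (h ▸ hcd)) else 0 := by
  ext u v
  rw [eSingle_mul_apply]
  split_ifs <;> simp_all [eSingle_apply]

lemma eSingle_mul_mul_eSingle_apply (a b : X) (f : IncidenceAlgebra R X) (u v : X) :
    (eSingle a a le_rfl * f * eSingle b b le_rfl : IncidenceAlgebra R X) u v =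
      if u = a ∧ v = b then f a b else 0 := by
  rw [mul_eSingle_apply, eSingle_mul_apply]
  split_ifs <;> simp_all

lemma eSingle_mul_mul_eSingle_of_le {a b : X} (hab : a ≤ b) (f : IncidenceAlgebra R X) :
    eSingle a a le_rfl * f * eSingle b b le_rfl = f a b • eSingle a b hab := by
  ext u v
  rw [eSingle_mul_mul_eSingle_apply, constSMul_apply, eSingle_apply]
  split_ifs <;> simp

lemma eSingle_mul_mul_eSingle_of_not_le {a b : X} (hab : ¬a ≤ b) (f : IncidenceAlgebra R X) :
    eSingle a a le_rfl * f * eSingle b b le_rfl = 0 := by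
  ext u v
  rw [eSingle_mul_mul_eSingle_apply, IncidenceAlgebra.zero_apply, apply_eq_zero_of_not_le hab]
  simp

lemma eSingle_eq_add_mul_mul_add {a b : X} (hab : a < b) :
    eSingle (R := R) a b hab.le = (eSingle a a le_rfl + eSingle b b le_rfl) *
      eSingle a b hab.le * (eSingle a a le_rfl + eSingle b b le_rfl) := by
  ext u v
  simp only [add_mul, mul_add, IncidenceAlgebra.add_apply, eSingle_mul_mul_eSingle_apply,
    eSingle_apply]
  simp [hab.ne, hab.ne']

lemma eSingle_mul_add_mul_ne_zero_iff [Nontrivial R] {a b c d : X} (hab : a < b) (hcd : c < d) :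
    eSingle (R := R) a b hab.le * eSingle c d hcd.le + eSingle c d hcd.le * eSingle a b hab.le ≠ 0 ↔
      b = c ∨ d = a := by
  rw [eSingle_mul_eSingle, eSingle_mul_eSingle]
  split_ifs with h₁ h₂ h₂
  · subst h₁ h₂; exact (lt_asymm hab hcd).elim
  all_goals simp_all [eSingle_ne_zero]

end Single

lemma map_mul_add_mul {A B G : Type*} [NonUnitalNonAssocSemiring A] [NonUnitalNonAssocRing B]
    [FunLike G A B] [AddMonoidHomClass G A B] (φ : G) (hsq : ∀ f, φ (f * f) = φ f * φ f)
    (f g : A) : φ (f * g + g * f) = φ f * φ g + φ g * φ f := by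
  have h := hsq (f + g)
  simp only [add_mul, mul_add, map_add, hsq] at h
  rw [map_add, ← sub_eq_zero, ← sub_eq_zero.2 h]
  abel

lemma PosetConnected.lt_iff_lt {X : Type*} [PartialOrder X] (hX : PosetConnected X)
    {P : X → X → Prop}
    (hP : ∀ ⦃x y u v⦄, x < y → u < v → (x = u ∨ x = v ∨ y = u ∨ y = v) → (P x y ↔ P u v))
    {x y u v : X} (hxy : x < y) (huv : u < v) : P x y ↔ P u v := by
  suffices h : ∀ z, Relation.ReflTransGen (fun a b : X => a ≤ b ∨ b ≤ a) x z →
      ∀ ⦃u v⦄, u < v → (u = z ∨ v = z) → (P x y ↔ P u v) from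
    h u (hX x u) huv (Or.inl rfl)
  intro z hz
  induction hz with
  | refl => exact fun u v huv hu => hP hxy huv (by tauto)
  | @tail z w _ hzw ih =>
    intro u v huv hw
    rcases hzw with h | h <;> rcases h.eq_or_lt with rfl | hlt
    · exact ih huv hw
    · exact (ih hlt (Or.inl rfl)).trans (hP hlt huv (by tauto))
    · exact ih huv hw
    · exact (ih hlt (Or.inr rfl)).trans (hP hlt huv (by tauto))

lemma Equiv.monotone_symm {X : Type*} [Preorder X] [Finite X] {e : X ≃ X} (he : Monotone e) :
    Monotone e.symm := fun x y hxy =>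
  Equiv.Perm.perm_symm_mapsTo_of_mapsTo (e.prodCongr e) (s := {p : X × X | p.1 ≤ p.2})
    (fun _ hp => he hp) (show (x, y) ∈ {p : X × X | p.1 ≤ p.2} from hxy)

lemma Equiv.antitone_symm {X : Type*} [Preorder X] [Finite X] {e : X ≃ X} (he : Antitone e) :
    Antitone e.symm := fun x y hxy =>
  Equiv.Perm.perm_symm_mapsTo_of_mapsTo ((e.prodCongr e).trans (Equiv.prodComm X X))
    (s := {p : X × X | p.1 ≤ p.2}) (fun _ hp => he hp)
    (show (x, y) ∈ {p : X × X | p.1 ≤ p.2} from hxy)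

section Jordan

variable {X F : Type*} [PartialOrder X] [LocallyFiniteOrder X] [DecidableEq X] [Field F]
  {φ : IncidenceAlgebra F X →ₗ[F] IncidenceAlgebra F X} {l : X ≃ X}

lemma exists_map_eSingle_eq_smul (hinj : Function.Injective φ)
    (htriple : ∀ f g, φ (f * g * f) = φ f * φ g * φ f)
    (hl : ∀ x, φ (eSingle x x le_rfl) = eSingle (l x) (l x) le_rfl) {x y : X} (hxy : x < y) :
    ∃ (a b : X) (hab : a < b) (c : F), c ≠ 0 ∧ φ (eSingle x y hxy.le) = c • eSingle a b hab.le ∧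
      (a = l x ∧ b = l y ∨ a = l y ∧ b = l x) := by
  obtain ⟨g, hφ⟩ : ∃ g, φ (eSingle x y hxy.le) = g := ⟨_, rfl⟩
  have hg : g ≠ 0 := hφ ▸ (map_ne_zero_iff φ hinj).2 (eSingle_ne_zero _)
  have hdiag : ∀ z, eSingle (l z) (l z) le_rfl * g * eSingle (l z) (l z) le_rfl = 0 := fun z => by
    rw [← hl, ← hφ, ← htriple, eSingle_mul_mul_eSingle_of_le le_rfl, eSingle_apply,
      if_neg fun h => hxy.ne (h.1.symm.trans h.2), zero_smul, map_zero]
  have hsplit : g = eSingle (l x) (l x) le_rfl * g * eSingle (l y) (l y) le_rfl +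
      eSingle (l y) (l y) le_rfl * g * eSingle (l x) (l x) le_rfl := by
    have h := congrArg φ (eSingle_eq_add_mul_mul_add (R := F) hxy)
    rw [htriple, map_add, hl, hl, hφ] at h
    simp only [add_mul, mul_add, hdiag, zero_add, add_zero] at h
    exact h.trans (add_comm _ _)
  have hcorner : ∀ {a b : X} (hab : a < b), g = eSingle a a le_rfl * g * eSingle b b le_rfl +
      eSingle b b le_rfl * g * eSingle a a le_rfl → ∃ c : F, c ≠ 0 ∧ g = c • eSingle a b hab.le :=
    fun hab hs => by
      rw [eSingle_mul_mul_eSingle_of_not_le hab.not_ge, add_zero,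
        eSingle_mul_mul_eSingle_of_le hab.le] at hs
      exact ⟨g _ _, fun h0 => hg (by rw [hs, h0, zero_smul]), hs⟩
  have hne : l x ≠ l y := l.injective.ne hxy.ne
  by_cases h₁ : l x ≤ l y
  · have hlt := h₁.lt_of_ne hne
    obtain ⟨c, hc, hgc⟩ := hcorner hlt hsplit
    exact ⟨_, _, hlt, c, hc, hφ.trans hgc, Or.inl ⟨rfl, rfl⟩⟩
  by_cases h₂ : l y ≤ l x
  · have hlt := h₂.lt_of_ne hne.symm
    obtain ⟨c, hc, hgc⟩ := hcorner hlt (hsplit.trans (add_comm _ _))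
    exact ⟨_, _, hlt, c, hc, hφ.trans hgc, Or.inr ⟨rfl, rfl⟩⟩
  rw [eSingle_mul_mul_eSingle_of_not_le h₁, eSingle_mul_mul_eSingle_of_not_le h₂,
    add_zero] at hsplit
  exact absurd hsplit hg

lemma lt_iff_lt_of_common_endpoint (hinj : Function.Injective φ)
    (hsq : ∀ f, φ (f * f) = φ f * φ f)
    (htriple : ∀ f g, φ (f * g * f) = φ f * φ g * φ f)
    (hl : ∀ x, φ (eSingle x x le_rfl) = eSingle (l x) (l x) le_rfl) {x y u v : X}
    (hxy : x < y) (huv : u < v) (hshare : x = u ∨ x = v ∨ y = u ∨ y = v) :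
    l x < l y ↔ l u < l v := by
  obtain ⟨a, b, hab, c, hc, hφ, hlab⟩ := exists_map_eSingle_eq_smul hinj htriple hl hxy
  obtain ⟨a', b', hab', c', hc', hφ', hlab'⟩ := exists_map_eSingle_eq_smul hinj htriple hl huv
  have hchain : y = u ∨ v = x ↔ b = a' ∨ b' = a := by
    rw [← eSingle_mul_add_mul_ne_zero_iff (R := F) hxy huv,
      ← eSingle_mul_add_mul_ne_zero_iff (R := F) hab hab', ← map_ne_zero_iff φ hinj,
      map_mul_add_mul φ hsq, hφ, hφ', smul_mul_smul_comm, smul_mul_smul_comm, mul_comm c',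
      ← smul_add, smul_ne_zero_iff_right (mul_ne_zero hc hc')]
  rcases hlab with ⟨rfl, rfl⟩ | ⟨rfl, rfl⟩ <;> rcases hlab' with ⟨rfl, rfl⟩ | ⟨rfl, rfl⟩ <;>
    simp only [l.injective.eq_iff] at hchain
  · exact iff_of_true hab hab'
  · exfalso; grind
  · exfalso; grind
  · exact iff_of_false hab.asymm hab'.asymm

end Jordan

/-- if a Jordan automorphism `φ` of the incidence algebra of a finite connected
poset satisfies `φ(e_x) = e_{λ(x)}` for a bijection `λ`, then `λ` is an order automorphism or
an order anti-automorphism of `X`. -/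
theorem stmt_7 {X : Type*} [PartialOrder X] [Fintype X] [LocallyFiniteOrder X] [DecidableEq X]
    {F : Type*} [Field F]
    (hconn : PosetConnected X)
    (φ : IncidenceAlgebra F X →ₗ[F] IncidenceAlgebra F X)
    (hbij : Function.Bijective φ)
    (hsq : ∀ f : IncidenceAlgebra F X, φ (f * f) = φ f * φ f)
    (htriple : ∀ f g : IncidenceAlgebra F X, φ (f * g * f) = φ f * φ g * φ f)
    (l : X ≃ X)
    (hl : ∀ x : X, φ (eSingle x x le_rfl) = eSingle (l x) (l x) le_rfl) :
    ((∀ x y : X, x ≤ y → l x ≤ l y) ∧ (∀ x y : X, x ≤ y → l.symm x ≤ l.symm y)) ∨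
      ((∀ x y : X, x ≤ y → l y ≤ l x) ∧ (∀ x y : X, x ≤ y → l.symm y ≤ l.symm x)) := by
  have hdir : ∀ ⦃x y⦄, x < y → l x < l y ∨ l y < l x := fun x y hxy => by
    obtain ⟨_, _, hab, -, -, -, ⟨rfl, rfl⟩ | ⟨rfl, rfl⟩⟩ :=
      exists_map_eSingle_eq_smul hbij.1 htriple hl hxy
    exacts [Or.inl hab, Or.inr hab]
  by_cases h : ∃ x y, x < y ∧ l x < l y
  · obtain ⟨x, y, hxy, hlxy⟩ := h
    have hmono : StrictMono l := fun u v huv =>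
      (hconn.lt_iff_lt (P := fun a b => l a < l b)
        (fun _ _ _ _ => lt_iff_lt_of_common_endpoint hbij.1 hsq htriple hl) hxy huv).1 hlxy
    exact Or.inl ⟨fun _ _ h => hmono.monotone h, fun _ _ h => Equiv.monotone_symm hmono.monotone h⟩
  · have hanti : StrictAnti l := fun u v huv =>
      (hdir huv).resolve_left fun hlt => h ⟨u, v, huv, hlt⟩
    exact Or.inr ⟨fun _ _ h => hanti.antitone h, fun _ _ h => Equiv.antitone_symm hanti.antitone h⟩
end
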